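/- For bounded operators A, B between Hilbert spaces, A ≤* B in the star order (i.e., A*A = A*B and AA* = BA*) if and only if A = P_A B and A = B P_{A*}, where P_A and P_{A*} are the orthogonal projections onto the closures of range(A) and range(A*) respectively. -/

import Mathlib

/-!
The closure of `range A` has orthogonal complement `ker A†`, so `ker P_A = ker A†`. Hence
`A†(B - A) = 0` iff `P_A (B - A) = 0`, i.e. `A = P_A B` because `P_A A = A`. The second
condition of the star order is the adjoint of the first one written for `A†` and `B†`.
-/

open ContinuousLinearMap

/-- The orthogonal projection onto the closure of the range of `A`. -/
noncomputable def projCR {E F : Type*} [NormedAddCommGroup E] [InnerProductSpace ℂ E]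
    [NormedAddCommGroup F] [InnerProductSpace ℂ F] [CompleteSpace F]
    (A : E →L[ℂ] F) : F →L[ℂ] F :=
  (LinearMap.range (A : E →ₗ[ℂ] F)).topologicalClosure.subtypeL ∘L
    Submodule.orthogonalProjectionOnto (LinearMap.range (A : E →ₗ[ℂ] F)).topologicalClosure

variable {H K : Type*} [NormedAddCommGroup H] [InnerProductSpace ℂ H] [CompleteSpace H]
  [NormedAddCommGroup K] [InnerProductSpace ℂ K] [CompleteSpace K]

section projCR

variable {E F G : Type*} [NormedAddCommGroup E] [InnerProductSpace ℂ E]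
  [NormedAddCommGroup F] [InnerProductSpace ℂ F] [CompleteSpace F]
  [NormedAddCommGroup G] [InnerProductSpace ℂ G]

theorem projCR_eq_starProjection (A : E →L[ℂ] F) :
    projCR A = (LinearMap.range (A : E →ₗ[ℂ] F)).topologicalClosure.starProjection :=
  rfl

theorem isSelfAdjoint_projCR (A : E →L[ℂ] F) : IsSelfAdjoint (projCR A) :=
  isSelfAdjoint_starProjection _

theorem projCR_comp_self (A : E →L[ℂ] F) : projCR A ∘L A = A := by
  ext x
  exact Submodule.starProjection_eq_self_iff.mpr
    (Submodule.le_topologicalClosure _ (LinearMap.mem_range_self _ x))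

variable [CompleteSpace E]

theorem projCR_apply_eq_zero_iff (A : E →L[ℂ] F) {v : F} :
    projCR A v = 0 ↔ adjoint A v = 0 := by
  rw [projCR_eq_starProjection, Submodule.starProjection_apply_eq_zero_iff,
    Submodule.orthogonal_closure]
  exact Submodule.ext_iff.mp A.orthogonal_range v

theorem projCR_comp_eq_zero_iff (A : E →L[ℂ] F) (C : G →L[ℂ] F) :
    projCR A ∘L C = 0 ↔ adjoint A ∘L C = 0 := by
  simp only [ContinuousLinearMap.ext_iff, comp_apply, zero_apply, projCR_apply_eq_zero_iff]

theorem adjoint_comp_projCR (A : E →L[ℂ] F) : adjoint A ∘L projCR A = adjoint A := by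
  conv_rhs => rw [← projCR_comp_self A]
  rw [adjoint_comp, (isSelfAdjoint_projCR A).adjoint_eq]

end projCR

theorem adjoint_comp_self_eq_iff (A B : H →L[ℂ] K) :
    adjoint A ∘L A = adjoint A ∘L B ↔ A = projCR A ∘L B := by
  constructor
  · intro h
    have : projCR A ∘L (B - A) = 0 := by
      rw [projCR_comp_eq_zero_iff, comp_sub, h, sub_self]
    rwa [comp_sub, projCR_comp_self, sub_eq_zero, eq_comm] at this
  · intro h
    calc adjoint A ∘L A = adjoint A ∘L (projCR A ∘L B) := by rw [← h]
      _ = adjoint A ∘L B := by rw [← comp_assoc, adjoint_comp_projCR]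

theorem self_comp_adjoint_eq_iff (A B : H →L[ℂ] K) :
    A ∘L adjoint A = B ∘L adjoint A ↔ A = B ∘L projCR (adjoint A) := by
  have h := adjoint_comp_self_eq_iff (adjoint A) (adjoint B)
  rwa [adjoint_adjoint, ← adjoint.injective.eq_iff, ← adjoint.injective.eq_iff (a := adjoint A),
    adjoint_comp, adjoint_comp, adjoint_comp, adjoint_adjoint, adjoint_adjoint,
    (isSelfAdjoint_projCR _).adjoint_eq] at h

theorem stmt1 (A B : H →L[ℂ] K) :
    ((adjoint A) ∘L A = (adjoint A) ∘L B ∧ A ∘L (adjoint A) = B ∘L (adjoint A)) ↔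
      (A = (projCR A) ∘L B ∧ A = B ∘L (projCR (adjoint A))) :=
  and_congr (adjoint_comp_self_eq_iff A B) (self_comp_adjoint_eq_iff A B)
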